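/- arXiv:1612.03450 — 4 statements merged into one kernel-verified Lean document; each statement's English description precedes it below -/
import Mathlib

section
/- Pythagorean decomposition for projected residuals. Let S ⊆ ℝ^m be a linear subspace with orthogonal projection P onto S, let Y ∈ ℝ^{m×k} be any matrix, let P_Y denote the orthogonal projection onto the column space of Y, and let P' denote the orthogonal projection onto the column space of PY. Then for every y ∈ ℝ^m: ‖P(I − P_Y)y‖₂² = ‖P(I − P')y‖₂² + ‖(P' − P P_Y)y‖₂². -/
open MeasureTheory ProbabilityTheory Real Finset
open scoped RealInnerProductSpace ENNReal NNReal

noncomputable section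

abbrev Vec (m : ℕ) := EuclideanSpace ℝ (Fin m)

/-- Residual of `y` after orthogonal projection onto the span of the dictionary atoms
indexed by `Λ`; this equals `(I - D_Λ D_Λ†) y`. -/
def projResidual {m : ℕ} {ι : Type*} (D : ι → Vec m) (Λ : Finset ι) (y : Vec m) : Vec m :=
  y - (Submodule.orthogonalProjectionOnto (Submodule.span ℝ (D '' (↑Λ : Set ι))) y : Vec m)

/-- `Λ, r` is a run of `T` iterations of OMP on data point `y` with dictionary `D`
(ties in the selection rule broken arbitrarily). -/
structure IsOMPRun {m : ℕ} {ι : Type*} [DecidableEq ι] (D : ι → Vec m) (y : Vec m) (T : ℕ)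
    (Λ : ℕ → Finset ι) (r : ℕ → Vec m) : Prop where
  init_idx : Λ 0 = ∅
  init_res : r 0 = y
  step : ∀ s < T, ∃ j ∉ Λ s,
    Λ (s + 1) = insert j (Λ s) ∧ ∀ j' ∉ Λ s, |⟪D j', r s⟫| ≤ |⟪D j, r s⟫|
  res : ∀ s < T, r (s + 1) = projResidual D (Λ (s + 1)) y

/-- `sel, q` is a run of `T` iterations of MP on data point `y` with dictionary `D`
(ties broken arbitrarily); `sel s` is the index `ω_{s+1}` selected in iteration `s+1`. -/
structure IsMPRun {m : ℕ} {ι : Type*} (D : ι → Vec m) (y : Vec m) (T : ℕ)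
    (sel : ℕ → ι) (q : ℕ → Vec m) : Prop where
  init : q 0 = y
  sel_max : ∀ s < T, ∀ j, |⟪D j, q s⟫| ≤ |⟪D (sel s), q s⟫|
  res : ∀ s < T, q (s + 1) = q s - (⟪D (sel s), q s⟫ / ‖D (sel s)‖ ^ 2) • D (sel s)

section Concrete

variable {m : ℕ} {ι : Type*} [Fintype ι] [LinearOrder ι]

/-- The index selected by OMP with smallest-index tie-breaking, given the current active
set `Λ` and residual `r` (`none` if the dictionary is exhausted). -/
def ompSelect (D : ι → Vec m) (Λ : Finset ι) (r : Vec m) : Option ι :=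
  let S := (Finset.univ \ Λ).filter fun j => ∀ j' ∈ Finset.univ \ Λ, |⟪D j', r⟫| ≤ |⟪D j, r⟫|
  if h : S.Nonempty then some (S.min' h) else none

/-- The state (active set, residual) of OMP with smallest-index tie-breaking after `s`
iterations. -/
def ompState (D : ι → Vec m) (y : Vec m) : ℕ → Finset ι × Vec m
  | 0 => (∅, y)
  | s + 1 =>
    let p := ompState D y s
    match ompSelect D p.1 p.2 with
    | some j => (insert j p.1, projResidual D (insert j p.1) y)
    | none => p

/-- The index selected by MP with smallest-index tie-breaking for the residual `q`. -/
def mpSelect (D : ι → Vec m) (q : Vec m) : Option ι :=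
  let S := Finset.univ.filter fun j => ∀ j', |⟪D j', q⟫| ≤ |⟪D j, q⟫|
  if h : S.Nonempty then some (S.min' h) else none

/-- The MP residual after `s` iterations, with smallest-index tie-breaking. -/
def mpRes (D : ι → Vec m) (y : Vec m) : ℕ → Vec m
  | 0 => y
  | s + 1 =>
    let q := mpRes D y s
    match mpSelect D q with
    | some j => q - (⟪D j, q⟫ / ‖D j‖ ^ 2) • D j
    | none => q

/-- The set of distinct indices selected by MP during the first `s` iterations. -/
def mpSelUpTo [DecidableEq ι] (D : ι → Vec m) (y : Vec m) (s : ℕ) : Finset ι :=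
  (Finset.range s).biUnion fun t => (mpSelect D (mpRes D y t)).toFinset

end Concrete

/-- The statistical data model for subspace clustering: `L` subspaces of `ℝ^m` of dimensions
`d ℓ` given as ranges of linear isometries `U ℓ` (orthonormal basis matrices), `n ℓ` points per
subspace, with subspace components `a ℓ i` i.i.d. uniform on the unit sphere (characterized by
unit norm and rotational invariance) and noise `z ℓ i` i.i.d. `N(0, (σ²/m) I_m)`, all jointly
independent. -/
structure SubspaceClusterModel (Ω : Type*) [MeasurableSpace Ω] (μ : Measure Ω)
    (L m : ℕ) (d n : Fin L → ℕ) (σ : ℝ)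
    (U : (ℓ : Fin L) → EuclideanSpace ℝ (Fin (d ℓ)) →ₗᵢ[ℝ] Vec m)
    (a : (ℓ : Fin L) → Fin (n ℓ) → Ω → EuclideanSpace ℝ (Fin (d ℓ)))
    (z : (ℓ : Fin L) → Fin (n ℓ) → Ω → Vec m) : Prop where
  meas_a : ∀ ℓ i, Measurable (a ℓ i)
  meas_z : ∀ ℓ i, Measurable (z ℓ i)
  norm_a : ∀ ℓ i, ∀ᵐ ω ∂μ, ‖a ℓ i ω‖ = 1
  rotinv_a : ∀ ℓ i, ∀ W : EuclideanSpace ℝ (Fin (d ℓ)) ≃ₗᵢ[ℝ] EuclideanSpace ℝ (Fin (d ℓ)),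
    Measure.map (fun ω => W (a ℓ i ω)) μ = Measure.map (a ℓ i) μ
  coord_indep_z : ∀ ℓ i, iIndepFun (fun k ω => z ℓ i ω k) μ
  gauss_z : ∀ ℓ i, ∀ k : Fin m,
    Measure.map (fun ω => z ℓ i ω k) μ = gaussianReal 0 (Real.toNNReal (σ ^ 2 / m))
  indep_az : ∀ ℓ i, IndepFun (a ℓ i) (z ℓ i) μ
  indep_pts : iIndepFun
    (fun (p : (ℓ : Fin L) × Fin (n ℓ)) ω => (a p.1 p.2 ω, z p.1 p.2 ω)) μ

/-- The affinity between two subspaces given by orthonormal bases `Uk, Ul`: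
`‖Ukᵀ Ul‖_F / √(min dk dl)`. -/
def affinity {m dk dl : ℕ} (Uk : EuclideanSpace ℝ (Fin dk) →ₗᵢ[ℝ] Vec m)
    (Ul : EuclideanSpace ℝ (Fin dl) →ₗᵢ[ℝ] Vec m) : ℝ :=
  Real.sqrt (∑ p : Fin dk, ∑ q : Fin dl,
      ⟪Uk (EuclideanSpace.single p 1), Ul (EuclideanSpace.single q 1)⟫ ^ 2) /
    Real.sqrt (min dk dl)

/-- Total number of data points. -/
def Ntot (L : ℕ) (n : Fin L → ℕ) : ℕ := ∑ ℓ, n ℓ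

/-- Maximal subspace dimension. -/
def dMax (L : ℕ) (d : Fin L → ℕ) : ℕ := Finset.univ.sup d

/-- Minimal sampling density `ρ_min = min_ℓ (n_ℓ - 1)/d_ℓ`. -/
def rhoMin (L : ℕ) (d n : Fin L → ℕ) : ℝ := ⨅ ℓ : Fin L, ((n ℓ : ℝ) - 1) / (d ℓ : ℝ)

/-- The clustering condition with constant `c(σ) = cA` and effective iteration count `s`. -/
def ClusteringCond (L m : ℕ) (d n : Fin L → ℕ) (σ : ℝ) (s : ℕ)
    (U : (ℓ : Fin L) → EuclideanSpace ℝ (Fin (d ℓ)) →ₗᵢ[ℝ] Vec m) (cA : ℝ) : Prop :=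
  ∀ k ℓ : Fin L, k ≠ ℓ →
    affinity (U k) (U ℓ) +
        10 * σ / Real.sqrt (Real.log ((Ntot L n : ℝ) ^ 3 * s)) *
          (Real.sqrt (dMax L d) / Real.sqrt m * cA +
            Real.sqrt 2 / Real.sqrt (rhoMin L d n) * (1 + 3 / 2 * σ)) ≤
      1 / (8 * Real.log ((Ntot L n : ℝ) ^ 3 * s))

/-- The probability bound `P⋆`. -/
def Pstar (L m : ℕ) (d n : Fin L → ℕ) (cd cm : ℝ) : ℝ :=
  1 - 6 / (Ntot L n : ℝ) - 5 * (Ntot L n : ℝ) * Real.exp (-(cm * m)) -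
    6 * ∑ ℓ, (n ℓ : ℝ) * Real.exp (-(cd * d ℓ))

/-- Smallest singular value of a linear map out of `ℝ^s`. -/
def sminLin {s d : ℕ} (A : EuclideanSpace ℝ (Fin s) →ₗ[ℝ] EuclideanSpace ℝ (Fin d)) : ℝ :=
  ⨅ v : Metric.sphere (0 : EuclideanSpace ℝ (Fin s)) 1, ‖A (v : EuclideanSpace ℝ (Fin s))‖

/-- Spectral norm (largest singular value) of a linear map between Euclidean spaces. -/
def specNorm {s m : ℕ} (A : EuclideanSpace ℝ (Fin s) →ₗ[ℝ] Vec m) : ℝ :=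
  ‖LinearMap.toContinuousLinearMap A‖


/-- Orthogonal projection `P∥ = U Uᵀ` onto the subspace spanned by the orthonormal columns
of `U`, as a map `ℝ^M → ℝ^M`. -/
def projPar {M d : ℕ} (U : EuclideanSpace ℝ (Fin d) →ₗᵢ[ℝ] Vec M) (x : Vec M) : Vec M :=
  (Submodule.orthogonalProjectionOnto (LinearMap.range U.toLinearMap) x : Vec M)

/-- Orthogonal projection `P⊥ = I - U Uᵀ` onto the orthogonal complement. -/
def projPerp {M d : ℕ} (U : EuclideanSpace ℝ (Fin d) →ₗᵢ[ℝ] Vec M) (x : Vec M) : Vec M :=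
  x - projPar U x

/-- The data point `y_i^(ℓ) = U^(ℓ) a_i^(ℓ) + z_i^(ℓ)`. -/
def dataPt {Ω : Type*} {L M : ℕ} {d n : Fin L → ℕ}
    (U : (ℓ : Fin L) → EuclideanSpace ℝ (Fin (d ℓ)) →ₗᵢ[ℝ] Vec M)
    (a : (ℓ : Fin L) → Fin (n ℓ) → Ω → EuclideanSpace ℝ (Fin (d ℓ)))
    (z : (ℓ : Fin L) → Fin (n ℓ) → Ω → Vec M)
    (ℓ : Fin L) (i : Fin (n ℓ)) (ω : Ω) : Vec M :=
  U ℓ (a ℓ i ω) + z ℓ i ω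

/-- The reduced dictionary `Y_ℓ \ {y_i^(ℓ)}`. -/
def redDict {Ω : Type*} {L M : ℕ} {d n : Fin L → ℕ}
    (U : (ℓ : Fin L) → EuclideanSpace ℝ (Fin (d ℓ)) →ₗᵢ[ℝ] Vec M)
    (a : (ℓ : Fin L) → Fin (n ℓ) → Ω → EuclideanSpace ℝ (Fin (d ℓ)))
    (z : (ℓ : Fin L) → Fin (n ℓ) → Ω → Vec M)
    (ℓ : Fin L) (i : Fin (n ℓ)) (ω : Ω) : {j : Fin (n ℓ) // j ≠ i} → Vec M :=
  fun j => dataPt U a z ℓ j.1 ω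

/-- The full dictionary `Y \ {y_i^(ℓ)}`. -/
def fullDict {Ω : Type*} {L M : ℕ} {d n : Fin L → ℕ}
    (U : (ℓ : Fin L) → EuclideanSpace ℝ (Fin (d ℓ)) →ₗᵢ[ℝ] Vec M)
    (a : (ℓ : Fin L) → Fin (n ℓ) → Ω → EuclideanSpace ℝ (Fin (d ℓ)))
    (z : (ℓ : Fin L) → Fin (n ℓ) → Ω → Vec M)
    (ℓ : Fin L) (i : Fin (n ℓ)) (ω : Ω) :
    {p : (k : Fin L) × Fin (n k) // p ≠ ⟨ℓ, i⟩} → Vec M :=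
  fun p => dataPt U a z p.1.1 p.1.2 ω

/-- State (selected index set, residual) after `s` iterations of reduced OMP for `y_i^(ℓ)`. -/
def redOMPstate {Ω : Type*} {L M : ℕ} {d n : Fin L → ℕ}
    (U : (ℓ : Fin L) → EuclideanSpace ℝ (Fin (d ℓ)) →ₗᵢ[ℝ] Vec M)
    (a : (ℓ : Fin L) → Fin (n ℓ) → Ω → EuclideanSpace ℝ (Fin (d ℓ)))
    (z : (ℓ : Fin L) → Fin (n ℓ) → Ω → Vec M)
    (ℓ : Fin L) (i : Fin (n ℓ)) (s : ℕ) (ω : Ω) :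
    Finset {j : Fin (n ℓ) // j ≠ i} × Vec M :=
  ompState (redDict U a z ℓ i ω) (dataPt U a z ℓ i ω) s

/-- Residual after `s` iterations of reduced MP for `y_i^(ℓ)`. -/
def redMPres {Ω : Type*} {L M : ℕ} {d n : Fin L → ℕ}
    (U : (ℓ : Fin L) → EuclideanSpace ℝ (Fin (d ℓ)) →ₗᵢ[ℝ] Vec M)
    (a : (ℓ : Fin L) → Fin (n ℓ) → Ω → EuclideanSpace ℝ (Fin (d ℓ)))
    (z : (ℓ : Fin L) → Fin (n ℓ) → Ω → Vec M)
    (ℓ : Fin L) (i : Fin (n ℓ)) (s : ℕ) (ω : Ω) : Vec M :=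
  mpRes (redDict U a z ℓ i ω) (dataPt U a z ℓ i ω) s

/-- The linear map `ℝ^d → ℝ^n` whose rows are the vectors `a j` (that is, `Aᵀ` where the
`a j` are the columns of `A`). -/
def rowsMap {n d : ℕ} (a : Fin n → EuclideanSpace ℝ (Fin d)) :
    EuclideanSpace ℝ (Fin d) →ₗ[ℝ] EuclideanSpace ℝ (Fin n) where
  toFun v := WithLp.toLp 2 (fun j => ⟪a j, v⟫)
  map_add' u v := by
    ext j
    simp [inner_add_right]
  map_smul' c v := by
    ext j
    simp [inner_smul_right]

end


/-!
Write `P`, `P_Y`, `P'` for the projections onto `S`, `span Y`, `span (P Y)`. Since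
`span (P Y) = P (span Y) ⊆ S`, projecting `P y` onto `span (P Y)` gives `P' y`, so `P y - P' y`
is orthogonal to `span (P Y)`, while `P' y - P P_Y y` lies in it. The identity is Pythagoras for
`P (I - P_Y) y = (P y - P' y) + (P' y - P P_Y y)`.
-/

namespace Submodule

variable {𝕜 E : Type*} [RCLike 𝕜] [NormedAddCommGroup E] [InnerProductSpace 𝕜 E]

theorem norm_sub_sq_eq_norm_sub_starProjection_sq_add (K : Submodule 𝕜 E)
    [K.HasOrthogonalProjection] (z : E) {w : E} (hw : w ∈ K) :
    ‖z - w‖ ^ 2 = ‖z - K.starProjection z‖ ^ 2 + ‖K.starProjection z - w‖ ^ 2 := by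
  have horth : inner 𝕜 (z - K.starProjection z) (K.starProjection z - w) = 0 :=
    (K.mem_orthogonal' _).1 (K.sub_starProjection_mem_orthogonal z) _
      (K.sub_mem (K.starProjection_apply_mem z) hw)
  simpa only [sq, sub_add_sub_cancel] using
    norm_add_sq_eq_norm_sq_add_norm_sq_of_inner_eq_zero _ _ horth

theorem span_range_starProjection_comp {ι : Type*} (K : Submodule 𝕜 E)
    [K.HasOrthogonalProjection] (v : ι → E) :
    span 𝕜 (Set.range (K.starProjection ∘ v)) =
      (span 𝕜 (Set.range v)).map (K.starProjection : E →ₗ[𝕜] E) := by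
  rw [Set.range_comp, ← span_image]
  rfl

end Submodule

/-- **Pythagorean decomposition for projected residuals.** With `P` the orthogonal projection
onto `S`, `P_Y` the projection onto the column space of `Y` (columns `v j`), and `P'` the
projection onto the column space of `P Y`, one has
`‖P(I-P_Y)y‖² = ‖P(I-P')y‖² + ‖(P' - P P_Y)y‖²`. -/
theorem pythagorean_projected_residual {m k : ℕ} (S : Submodule ℝ (Vec m))
    (v : Fin k → Vec m) (y : Vec m) :
    ‖(Submodule.orthogonalProjectionOnto S
        (y - (Submodule.orthogonalProjectionOnto (Submodule.span ℝ (Set.range v)) y : Vec m)) : Vec m)‖ ^ 2 =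
      ‖(Submodule.orthogonalProjectionOnto S
          (y - (Submodule.orthogonalProjectionOnto (Submodule.span ℝ
            (Set.range fun j => (Submodule.orthogonalProjectionOnto S (v j) : Vec m))) y : Vec m)) : Vec m)‖ ^ 2 +
      ‖((Submodule.orthogonalProjectionOnto (Submodule.span ℝ
            (Set.range fun j => (Submodule.orthogonalProjectionOnto S (v j) : Vec m))) y : Vec m) -
          (Submodule.orthogonalProjectionOnto S
            ((Submodule.orthogonalProjectionOnto (Submodule.span ℝ (Set.range v)) y : Vec m)) : Vec m))‖ ^ 2 := by
  set P := S.starProjection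
  set SY := Submodule.span ℝ (Set.range v)
  set S' := Submodule.span ℝ (Set.range fun j => (S.orthogonalProjectionOnto (v j) : Vec m))
  have hS' : S' = SY.map (P : Vec m →ₗ[ℝ] Vec m) := S.span_range_starProjection_comp v
  have hS'S : S' ≤ S := hS' ▸ LinearMap.map_le_range.trans S.range_starProjection.le
  have hPP' : P (S'.starProjection y) = S'.starProjection y :=
    Submodule.starProjection_eq_self_iff.2 (hS'S (S'.starProjection_apply_mem y))
  have hP'P : S'.starProjection (P y) = S'.starProjection y :=
    congrArg Subtype.val (Submodule.orthogonalProjectionOnto_starProjection_of_le hS'S y)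
  have hPQ : P (SY.starProjection y) ∈ S' :=
    hS' ▸ Submodule.mem_map_of_mem (SY.starProjection_apply_mem y)
  simp only [← Submodule.starProjection_apply]
  rw [map_sub, map_sub, hPP', ← hP'P]
  exact S'.norm_sub_sq_eq_norm_sub_starProjection_sq_add (P y) hPQ
end

section
/- Monotone lower bound on the projected residual. Let S ⊆ ℝ^m be a linear subspace with orthogonal projection P onto S. Let y_1,…,y_n ∈ ℝ^m, let Γ ⊆ Γ' ⊆ [n], let P_Γ denote the orthogonal projection onto span{y_j : j ∈ Γ}, and let P'_{Γ'} denote the orthogonal projection onto span{P y_j : j ∈ Γ'}. Then for every y ∈ ℝ^m: ‖P(I − P_Γ)y‖₂ ≥ ‖P y‖₂ − ‖P'_{Γ'} P y‖₂. -/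
/-
Write `P` for the projection onto `S` and `K` for `span {P y_j : j ∈ Γ'}`. The vector
`P (P_Γ y)` lies in `P (span {y_j : j ∈ Γ}) ⊆ K`, and the projection onto `K` is the best
approximation from `K`, so `‖P y‖ - ‖P_K P y‖ ≤ ‖P y - P_K P y‖ ≤ ‖P y - P P_Γ y‖ = ‖P (I - P_Γ) y‖`.
-/

open MeasureTheory ProbabilityTheory Real Finset
open scoped RealInnerProductSpace ENNReal NNReal

namespace Submodule

section Projection

variable {𝕜 E : Type*} [RCLike 𝕜] [NormedAddCommGroup E] [InnerProductSpace 𝕜 E]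
  (K : Submodule 𝕜 E) [K.HasOrthogonalProjection]

theorem norm_sub_starProjection_le (x : E) {k : E} (hk : k ∈ K) :
    ‖x - K.starProjection x‖ ≤ ‖x - k‖ := by
  rw [starProjection_minimal]
  exact ciInf_le ⟨0, Set.forall_mem_range.mpr fun _ ↦ norm_nonneg _⟩ (⟨k, hk⟩ : K)

theorem norm_sub_norm_starProjection_le (x : E) {k : E} (hk : k ∈ K) :
    ‖x‖ - ‖K.starProjection x‖ ≤ ‖x - k‖ :=
  (norm_sub_norm_le _ _).trans (K.norm_sub_starProjection_le x hk)

end Projection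

theorem map_span_image_le {R M N ι : Type*} [Semiring R] [AddCommMonoid M] [AddCommMonoid N]
    [Module R M] [Module R N] (f : M →ₗ[R] N) (v : ι → M) {s t : Set ι} (hst : s ⊆ t) :
    (span R (v '' s)).map f ≤ span R ((f ∘ v) '' t) := by
  rw [map_span, ← Set.image_comp]
  exact span_mono (Set.image_mono hst)

end Submodule

/-- **Monotone lower bound on the projected residual.** With `P` the orthogonal projection
onto `S`, `P_Γ` the projection onto `span{y_j : j ∈ Γ}` and `P'_{Γ'}` the projection onto
`span{P y_j : j ∈ Γ'}`, `Γ ⊆ Γ'`, one has `‖P(I-P_Γ)y‖ ≥ ‖P y‖ - ‖P'_{Γ'} P y‖`. -/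
theorem projected_residual_monotone_lower_bound {m n : ℕ} (S : Submodule ℝ (Vec m))
    (v : Fin n → Vec m) (Γ Γ' : Finset (Fin n)) (hΓ : Γ ⊆ Γ') (y : Vec m) :
    ‖(Submodule.orthogonalProjectionOnto S y : Vec m)‖ -
        ‖(Submodule.orthogonalProjectionOnto (Submodule.span ℝ
            ((fun j => (Submodule.orthogonalProjectionOnto S (v j) : Vec m)) '' ↑Γ'))
          ((Submodule.orthogonalProjectionOnto S y : Vec m)) : Vec m)‖ ≤
      ‖(Submodule.orthogonalProjectionOnto S
          (y - (Submodule.orthogonalProjectionOnto (Submodule.span ℝ (v '' ↑Γ)) y : Vec m)) : Vec m)‖ := by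
  set K := Submodule.span ℝ ((fun j => (S.orthogonalProjectionOnto (v j) : Vec m)) '' ↑Γ')
  have hPw : S.starProjection ((Submodule.span ℝ (v '' ↑Γ)).starProjection y) ∈ K :=
    Submodule.map_span_image_le S.starProjection.toLinearMap v (Finset.coe_subset.mpr hΓ)
      ⟨_, Submodule.coe_mem _, rfl⟩
  have h := K.norm_sub_norm_starProjection_le (S.starProjection y) hPw
  rw [← map_sub] at h
  exact h
end

section
/- Deterministic bound on the out-of-subspace component of the OMP residual. Let U ∈ ℝ^{m×d} have orthonormal columns, S = range(U), and P⊥ = I − UUᵀ. Let y = x + z with x ∈ S and z ∈ ℝ^m. Let Y_Γ = U Ã_Γ + Z_Γ ∈ ℝ^{m×s}, where Ã_Γ ∈ ℝ^{d×s} has full column rank, so its smallest singular value σ_min(Ã_Γ) is positive. Then ‖P⊥ (I − Y_Γ Y_Γ†) y‖₂ ≤ ‖P⊥ z‖₂ + ( ‖Z_Γ‖_{2→2} / σ_min(Ã_Γ) ) ‖y‖₂, where ‖·‖_{2→2} is the spectral norm and † the Moore–Penrose pseudoinverse. -/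
/-
Write `p = Y w = U (A w) + Z w` for the projection of `y` onto `range Y`. Since `P⊥ x = 0`,
`P⊥ (y - p) = P⊥ z - P⊥ p`, so it suffices to bound `‖P⊥ p‖`. For any `u` in a subspace `K`,
`‖u‖ ‖P_{K⊥} v‖ ≤ ‖v - u‖ ‖v‖`: both sides are governed by the two Pythagorean splittings of
`v` and `v - u` along `K ⊕ K⊥`, and the remaining real inequality is a Lagrange identity.
Taking `v = p`, `u = U (A w)` gives `σ_min(A) ‖w‖ ‖P⊥ p‖ ≤ ‖A w‖ ‖P⊥ p‖ ≤ ‖Z w‖ ‖p‖ ≤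
‖Z‖ ‖w‖ ‖y‖`.
-/

open MeasureTheory ProbabilityTheory Real Finset
open scoped RealInnerProductSpace ENNReal NNReal

section OrthogonalProjection

variable {E : Type*} [NormedAddCommGroup E] [InnerProductSpace ℝ E]

theorem Submodule.norm_mul_norm_starProjection_orthogonal_le (K : Submodule ℝ E)
    [K.HasOrthogonalProjection] {u : E} (hu : u ∈ K) (v : E) :
    ‖u‖ * ‖Kᗮ.starProjection v‖ ≤ ‖v - u‖ * ‖v‖ := by
  set t := ‖u‖
  set b := ‖K.starProjection v‖
  set c := ‖Kᗮ.starProjection v‖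
  set e := ‖K.starProjection v - u‖
  have hv : ‖v‖ ^ 2 = b ^ 2 + c ^ 2 := K.norm_sq_eq_add_norm_sq_starProjection v
  have hvu : ‖v - u‖ ^ 2 = e ^ 2 + c ^ 2 := by
    have h := K.norm_sq_eq_add_norm_sq_starProjection (v - u)
    rwa [map_sub, map_sub, K.starProjection_eq_self_iff.2 hu,
      K.starProjection_orthogonal_apply_eq_zero hu, sub_zero] at h
  have hbe : (b - t) ^ 2 ≤ e ^ 2 :=
    sq_le_sq' (abs_le.1 (abs_norm_sub_norm_le _ _)).1 (abs_le.1 (abs_norm_sub_norm_le _ _)).2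
  -- Lagrange: `((b - t)² + c²)(b² + c²) = (t c)² + ((b - t) b + c²)²`
  have key : (t * c) ^ 2 ≤ (‖v - u‖ * ‖v‖) ^ 2 := by
    rw [mul_pow, mul_pow, hv, hvu]
    nlinarith [sq_nonneg (t * b - b ^ 2 - c ^ 2), sq_nonneg c, sq_nonneg b]
  exact (sq_le_sq₀ (by positivity) (by positivity)).1 key

end OrthogonalProjection

section SingularValues

variable {s d m : ℕ}

theorem sminLin_nonneg (A : EuclideanSpace ℝ (Fin s) →ₗ[ℝ] EuclideanSpace ℝ (Fin d)) :
    0 ≤ sminLin A :=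
  Real.iInf_nonneg fun _ ↦ norm_nonneg _

theorem sminLin_mul_norm_le (A : EuclideanSpace ℝ (Fin s) →ₗ[ℝ] EuclideanSpace ℝ (Fin d))
    (w : EuclideanSpace ℝ (Fin s)) : sminLin A * ‖w‖ ≤ ‖A w‖ := by
  rcases eq_or_ne w 0 with rfl | hw
  · simp
  have hw' : 0 < ‖w‖ := norm_pos_iff.2 hw
  have hunit : ‖w‖⁻¹ • w ∈ Metric.sphere (0 : EuclideanSpace ℝ (Fin s)) 1 := by
    simp [norm_smul, hw'.ne']
  have hbdd : BddBelow (Set.range fun v : Metric.sphere (0 : EuclideanSpace ℝ (Fin s)) 1 ↦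
      ‖A v‖) := ⟨0, by rintro _ ⟨v, rfl⟩; exact norm_nonneg _⟩
  have h := ciInf_le hbdd ⟨_, hunit⟩
  rw [map_smul, norm_smul, norm_inv, norm_norm, inv_mul_eq_div, le_div_iff₀ hw'] at h
  exact h

theorem sminLin_pos [Nontrivial (EuclideanSpace ℝ (Fin s))]
    {A : EuclideanSpace ℝ (Fin s) →ₗ[ℝ] EuclideanSpace ℝ (Fin d)} (hA : Function.Injective A) :
    0 < sminLin A := by
  have hsphere : (Metric.sphere (0 : EuclideanSpace ℝ (Fin s)) 1).Nonempty :=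
    NormedSpace.sphere_nonempty.2 zero_le_one
  have := hsphere.to_subtype
  obtain ⟨v₀, hv₀, hmin⟩ := (isCompact_sphere (0 : EuclideanSpace ℝ (Fin s)) 1).exists_isMinOn
    hsphere
    (continuous_norm.comp A.continuous_of_finiteDimensional).continuousOn
  have hAv₀ : 0 < ‖A v₀‖ := by
    refine norm_pos_iff.2 fun h ↦ ?_
    have : v₀ = 0 := hA (by rw [h, map_zero])
    simp [this] at hv₀
  exact hAv₀.trans_le (le_ciInf fun v ↦ hmin v.2)

theorem norm_apply_le_specNorm_mul (Z : EuclideanSpace ℝ (Fin s) →ₗ[ℝ] Vec m)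
    (w : EuclideanSpace ℝ (Fin s)) : ‖Z w‖ ≤ specNorm Z * ‖w‖ :=
  (LinearMap.toContinuousLinearMap Z).le_opNorm w

end SingularValues

section ProjPerp

variable {m d s : ℕ} (U : EuclideanSpace ℝ (Fin d) →ₗᵢ[ℝ] Vec m)

theorem projPerp_eq_starProjection_orthogonal :
    projPerp U = (LinearMap.range U.toLinearMap)ᗮ.starProjection := by
  ext1 v
  rw [Submodule.starProjection_orthogonal']
  rfl

theorem norm_projPerp_add_le {A : EuclideanSpace ℝ (Fin s) →ₗ[ℝ] EuclideanSpace ℝ (Fin d)}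
    (hA : Function.Injective A) (Z : EuclideanSpace ℝ (Fin s) →ₗ[ℝ] Vec m)
    (w : EuclideanSpace ℝ (Fin s)) :
    ‖projPerp U (U (A w) + Z w)‖ ≤ specNorm Z / sminLin A * ‖U (A w) + Z w‖ := by
  rcases eq_or_ne w 0 with rfl | hw
  · simp [projPerp_eq_starProjection_orthogonal]
  have : Nontrivial (EuclideanSpace ℝ (Fin s)) := ⟨⟨w, 0, hw⟩⟩
  have hw' : 0 < ‖w‖ := norm_pos_iff.2 hw
  have hσ := sminLin_pos hA
  set p := U (A w) + Z w
  have hmain : sminLin A * ‖w‖ * ‖projPerp U p‖ ≤ specNorm Z * ‖w‖ * ‖p‖ := calc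
    sminLin A * ‖w‖ * ‖projPerp U p‖ ≤ ‖U (A w)‖ * ‖projPerp U p‖ := by
      rw [U.norm_map]; gcongr; exact sminLin_mul_norm_le A w
    _ ≤ ‖p - U (A w)‖ * ‖p‖ := by
      rw [projPerp_eq_starProjection_orthogonal]
      exact Submodule.norm_mul_norm_starProjection_orthogonal_le _
        (LinearMap.mem_range_self _ (A w)) p
    _ ≤ specNorm Z * ‖w‖ * ‖p‖ := by
      rw [add_sub_cancel_left]; gcongr; exact norm_apply_le_specNorm_mul Z w
  rw [div_mul_eq_mul_div, le_div_iff₀ hσ]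
  exact le_of_mul_le_mul_left (by linarith [hmain]) hw'

end ProjPerp

/-- `Y_Γ Y_Γ† y` is the orthogonal projection of `y` onto `range Y`, and full column rank of
`Ã_Γ` is injectivity of `A`. -/
theorem omp_residual_outSubspace_deterministic_bound {m d s : ℕ}
    (U : EuclideanSpace ℝ (Fin d) →ₗᵢ[ℝ] Vec m) (x z : Vec m)
    (hx : x ∈ LinearMap.range U.toLinearMap)
    (A : EuclideanSpace ℝ (Fin s) →ₗ[ℝ] EuclideanSpace ℝ (Fin d))
    (Z Y : EuclideanSpace ℝ (Fin s) →ₗ[ℝ] Vec m)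
    (hY : Y = U.toLinearMap ∘ₗ A + Z)
    (hA : Function.Injective A) :
    ‖projPerp U ((x + z) - (Submodule.orthogonalProjectionOnto (LinearMap.range Y) (x + z) : Vec m))‖ ≤
      ‖projPerp U z‖ + specNorm Z / sminLin A * ‖x + z‖ := by
  set p : Vec m := ((LinearMap.range Y).orthogonalProjectionOnto (x + z) : Vec m)
  obtain ⟨w, hw⟩ : p ∈ LinearMap.range Y := Subtype.property _
  have hp : p = U (A w) + Z w := by simp [← hw, hY]
  have hsplit : projPerp U (x + z - p) = projPerp U z - projPerp U p := by
    simp only [projPerp_eq_starProjection_orthogonal, map_sub, map_add,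
      Submodule.starProjection_orthogonal_apply_eq_zero hx, zero_add]
  calc ‖projPerp U (x + z - p)‖
      ≤ ‖projPerp U z‖ + ‖projPerp U p‖ := hsplit ▸ norm_sub_le _ _
    _ ≤ ‖projPerp U z‖ + specNorm Z / sminLin A * ‖p‖ := by
      rw [hp]; gcongr; exact norm_projPerp_add_le U hA Z w
    _ ≤ ‖projPerp U z‖ + specNorm Z / sminLin A * ‖x + z‖ :=
      add_le_add_right (mul_le_mul_of_nonneg_left
        ((LinearMap.range Y).norm_orthogonalProjectionOnto_apply_le _)
        (div_nonneg (norm_nonneg _) (sminLin_nonneg A))) _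
end

section
/- Deterministic lower bound on the projected MP residual. Let q_s be the MP residuals for y ∈ ℝ^m with dictionary y_1,…,y_n ∈ ℝ^m, let Ω_s = {ω_1,…,ω_s} be the set of indices selected up to iteration s, let P be the orthogonal projection onto a linear subspace S ⊆ ℝ^m, and for an index set Ω let P'_Ω denote the orthogonal projection onto span{P y_j : j ∈ Ω}. Then for all s ≤ s': ‖P q_s‖₂ ≥ ‖(I − P'_{Ω_{s'}}) P y‖₂. -/
open MeasureTheory ProbabilityTheory Real Finset
open scoped RealInnerProductSpace ENNReal NNReal

/- The MP residual `q_s` differs from `y` by a combination of the atoms selected so far; after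
projecting with `P`, `P y - P q_s` is therefore a point of `span{P y_j : j ∈ Ω_{s'}}`, and the
orthogonal projection `P'_{Ω_{s'}} P y` is at least as close to `P y` as that point is. -/

theorem Submodule.norm_sub_starProjection_le_s17 {𝕜 E : Type*} [RCLike 𝕜] [NormedAddCommGroup E]
    [InnerProductSpace 𝕜 E] {K : Submodule 𝕜 E} [K.HasOrthogonalProjection] (x : E) {v : E}
    (hv : v ∈ K) : ‖x - K.starProjection x‖ ≤ ‖x - v‖ := by
  rw [Submodule.starProjection_minimal]
  exact ciInf_le ⟨0, Set.forall_mem_range.mpr fun _ => norm_nonneg _⟩ (⟨v, hv⟩ : K)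

namespace IsMPRun

variable {m : ℕ} {ι : Type*} {D : ι → Vec m} {y : Vec m} {T : ℕ} {sel : ℕ → ι} {q : ℕ → Vec m}

theorem sub_res_mem_span (h : IsMPRun D y T sel q) {t : ℕ} (ht : t ≤ T) :
    y - q t ∈ Submodule.span ℝ (D '' (sel '' Set.Iio t)) := by
  induction t with
  | zero => simp [h.init]
  | succ t ih =>
    have hsub : Submodule.span ℝ (D '' (sel '' Set.Iio t)) ≤
        Submodule.span ℝ (D '' (sel '' Set.Iio (t + 1))) :=
      Submodule.span_mono <| Set.image_mono <| Set.image_mono <| Set.Iio_subset_Iio t.le_succ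
    have hatom : D (sel t) ∈ Submodule.span ℝ (D '' (sel '' Set.Iio (t + 1))) :=
      Submodule.subset_span ⟨sel t, ⟨t, Set.mem_Iio.mpr t.lt_succ_self, rfl⟩, rfl⟩
    have hstep : y - q (t + 1) = (y - q t) + (⟪D (sel t), q t⟫ / ‖D (sel t)‖ ^ 2) • D (sel t) := by
      rw [h.res t ht]
      abel
    rw [hstep]
    exact add_mem (hsub (ih (Nat.le_of_succ_le ht))) (Submodule.smul_mem _ _ hatom)

end IsMPRun

/-- **Deterministic lower bound on the projected MP residual.** For any MP run, any subspace
`S` with projection `P`, and `s ≤ s'`, `‖P q_s‖ ≥ ‖(I - P'_{Ω_{s'}}) P y‖`, where `P'_Ω`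
projects onto `span{P y_j : j ∈ Ω}` and `Ω_{s'}` is the set of indices selected up to
iteration `s'`. -/
theorem mp_projected_residual_lower_bound {m n : ℕ} (D : Fin n → Vec m) (y : Vec m)
    (T : ℕ) (sel : ℕ → Fin n) (q : ℕ → Vec m) (h : IsMPRun D y T sel q)
    (S : Submodule ℝ (Vec m)) (s s' : ℕ) (hss' : s ≤ s') (hs'T : s' ≤ T) :
    ‖(Submodule.orthogonalProjectionOnto S y : Vec m) -
        (Submodule.orthogonalProjectionOnto (Submodule.span ℝ
            ((fun j => (Submodule.orthogonalProjectionOnto S (D j) : Vec m)) ''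
              ↑((Finset.range s').image sel)))
          ((Submodule.orthogonalProjectionOnto S y : Vec m)) : Vec m)‖ ≤
      ‖(Submodule.orthogonalProjectionOnto S (q s) : Vec m)‖ := by
  simp only [← Submodule.starProjection_apply]
  have hres : y - q s ∈ Submodule.span ℝ (D '' (sel '' Set.Iio s')) :=
    Submodule.span_mono (Set.image_mono (Set.image_mono (Set.Iio_subset_Iio hss')))
      (h.sub_res_mem_span (hss'.trans hs'T))
  have hproj : S.starProjection y - S.starProjection (q s) ∈
      Submodule.span ℝ ((fun j => S.starProjection (D j)) '' ↑((Finset.range s').image sel)) := by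
    rw [← map_sub, Finset.coe_image, Finset.coe_range, ← Set.image_image]
    exact Submodule.apply_mem_span_image_of_mem_span _ hres
  exact (Submodule.norm_sub_starProjection_le_s17 _ hproj).trans_eq (by rw [sub_sub_cancel])
end
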